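/- Let ω be a C^∞ solution of −Δω = ω in Ω with ∂ω/∂n = 0 and ω = 1 on ∂Ω, and let Rω = −y ω_x + x ω_y. Then along ∂Ω: ∇Rω := (∂/∂x + i ∂/∂y)(Rω) equals (−i)·e^{iθ(s)}·(½ d(r²)/ds), and ∂(∇Rω)/∂n = (−i)·e^{iθ(s)}·( κ(s)·½ d(r²)/ds + i·½ d²(r²)/ds² ), where r²(s) = x(s)² + y(s)². -/

import Mathlib

noncomputable section
open Real MeasureTheory ComplexConjugate

/-- Partial derivative in the `x` direction. -/
def pdx (u : ℝ × ℝ → ℝ) (p : ℝ × ℝ) : ℝ := fderiv ℝ u p (1, 0)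

/-- Partial derivative in the `y` direction. -/
def pdy (u : ℝ × ℝ → ℝ) (p : ℝ × ℝ) : ℝ := fderiv ℝ u p (0, 1)

/-- The Laplacian on `ℝ²`. -/
def lap (u : ℝ × ℝ → ℝ) (p : ℝ × ℝ) : ℝ := pdx (pdx u) p + pdy (pdy u) p

/-- Partial derivative in the `x` direction, for complex-valued functions. -/
def pdxC (u : ℝ × ℝ → ℂ) (p : ℝ × ℝ) : ℂ := fderiv ℝ u p (1, 0)

/-- Partial derivative in the `y` direction, for complex-valued functions. -/
def pdyC (u : ℝ × ℝ → ℂ) (p : ℝ × ℝ) : ℂ := fderiv ℝ u p (0, 1)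

/-- Normal derivative with respect to the outward unit normal
`n = (sin θ, -cos θ)`, where `θ` is the tangent angle at the boundary point. -/
def nderiv (th : ℝ) (u : ℝ × ℝ → ℝ) (p : ℝ × ℝ) : ℝ :=
  Real.sin th * pdx u p - Real.cos th * pdy u p

/-- Normal derivative for complex-valued functions. -/
def nderivC (th : ℝ) (u : ℝ × ℝ → ℂ) (p : ℝ × ℝ) : ℂ :=
  (Real.sin th : ℂ) * pdxC u p - (Real.cos th : ℂ) * pdyC u p

/-- The rotation generator `R = -y ∂/∂x + x ∂/∂y`. -/
def Rop (u : ℝ × ℝ → ℝ) (p : ℝ × ℝ) : ℝ := -p.2 * pdx u p + p.1 * pdy u p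

/-- The scaling generator `S = x ∂/∂x + y ∂/∂y`. -/
def Sop (u : ℝ × ℝ → ℝ) (p : ℝ × ℝ) : ℝ := p.1 * pdx u p + p.2 * pdy u p

/-- `Ω` is a (Euclidean) disk. -/
def IsDisk (Om : Set (ℝ × ℝ)) : Prop :=
  ∃ z : ℝ × ℝ, ∃ r : ℝ, 0 < r ∧
    Om = {p : ℝ × ℝ | (p.1 - z.1) ^ 2 + (p.2 - z.2) ^ 2 < r ^ 2}

/-- `u` is `C^∞` on the closure of `Ω` (i.e. on an open neighborhood of it). -/
def SmoothNearClosure (Om : Set (ℝ × ℝ)) (u : ℝ × ℝ → ℝ) : Prop :=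
  ∃ U : Set (ℝ × ℝ), IsOpen U ∧ closure Om ⊆ U ∧ ContDiffOn ℝ (⊤ : ℕ∞) u U

/-- Complexified gradient `∇u = u_x + i u_y`. -/
def gradC (u : ℝ × ℝ → ℝ) (p : ℝ × ℝ) : ℂ :=
  (pdx u p : ℂ) + Complex.I * (pdy u p : ℂ)

/-- Complexified conjugate gradient `∇̄u = u_x - i u_y`. -/
def gradbarC (u : ℝ × ℝ → ℝ) (p : ℝ × ℝ) : ℂ :=
  (pdx u p : ℂ) - Complex.I * (pdy u p : ℂ)

/-- The bilinear form `B(φ, ψ; λ) = ∫∫_Ω (φ_x ψ̄_x + φ_y ψ̄_y - λ φ ψ̄)`. -/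
def Bform (Om : Set (ℝ × ℝ)) (lam : ℝ) (phi psi : ℝ × ℝ → ℂ) : ℂ :=
  ∫ p in Om, (pdxC phi p * conj (pdxC psi p) + pdyC phi p * conj (pdyC psi p)
    - (lam : ℂ) * phi p * conj (psi p))



-- Auxiliary lemmas
variable {U : Set (ℝ × ℝ)} {u v a b : ℝ × ℝ → ℝ} {p : ℝ × ℝ}

theorem fderiv_apply_eq (w : ℝ × ℝ) :
    fderiv ℝ u p w = w.1 * pdx u p + w.2 * pdy u p := by
  have : w = w.1 • ((1:ℝ),(0:ℝ)) + w.2 • ((0:ℝ),(1:ℝ)) := by simp [Prod.ext_iff]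
  rw [this, map_add, (fderiv ℝ u p).map_smul, (fderiv ℝ u p).map_smul]; simp [pdx, pdy]

theorem pdx_congr (h : u =ᶠ[nhds p] a) : pdx u p = pdx a p := by
  unfold pdx; rw [h.fderiv_eq]
theorem pdy_congr (h : u =ᶠ[nhds p] a) : pdy u p = pdy a p := by
  unfold pdy; rw [h.fderiv_eq]

theorem pdx_smooth (hU : IsOpen U) (h : ContDiffOn ℝ (⊤ : ℕ∞) u U) : ContDiffOn ℝ (⊤ : ℕ∞) (pdx u) U :=
  (h.fderiv_of_isOpen hU (by exact (by simp))).clm_apply contDiffOn_const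
theorem pdy_smooth (hU : IsOpen U) (h : ContDiffOn ℝ (⊤ : ℕ∞) u U) : ContDiffOn ℝ (⊤ : ℕ∞) (pdy u) U :=
  (h.fderiv_of_isOpen hU (by exact (by simp))).clm_apply contDiffOn_const
theorem diffAt {F : Type*} [NormedAddCommGroup F] [NormedSpace ℝ F] {g : ℝ × ℝ → F}
    (hU : IsOpen U) (h : ContDiffOn ℝ (⊤ : ℕ∞) g U) (hp : p ∈ U) :
    DifferentiableAt ℝ g p :=
  ((h p hp).contDiffAt (hU.mem_nhds hp)).differentiableAt (by simp)

theorem symm_second (hU : IsOpen U) (h : ContDiffOn ℝ (⊤ : ℕ∞) u U) (hp : p ∈ U) :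
    pdx (pdy u) p = pdy (pdx u) p := by
  have hdf : DifferentiableAt ℝ (fderiv ℝ u) p :=
    diffAt hU (h.fderiv_of_isOpen hU (by exact (by simp))) hp
  have hsym := second_derivative_symmetric_of_eventually
    (f := u) (f' := fderiv ℝ u) (x := p)
    (by filter_upwards [hU.mem_nhds hp] with y hy
        exact (diffAt hU h hy).hasFDerivAt)
    hdf.hasFDerivAt
  have key : ∀ w w' : ℝ × ℝ,
      fderiv ℝ (fun q => fderiv ℝ u q w') p w = fderiv ℝ (fderiv ℝ u) p w w' := by
    intro w w'
    have : (fun q => fderiv ℝ u q w')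
        = (fun L : (ℝ × ℝ) →L[ℝ] ℝ => L w') ∘ (fderiv ℝ u) := rfl
    rw [this]
    have e : fderiv ℝ ((fun L : (ℝ × ℝ) →L[ℝ] ℝ => L w') ∘ fderiv ℝ u) p
        = (ContinuousLinearMap.apply ℝ ℝ w').comp (fderiv ℝ (fderiv ℝ u) p) :=
      ((ContinuousLinearMap.apply ℝ ℝ w').hasFDerivAt.comp p hdf.hasFDerivAt).fderiv
    rw [e]; rfl
  unfold pdx pdy
  rw [key, key, hsym]

/-- Derivatives of the shape `-y a + x b`. -/
theorem shape_hasFDerivAt (ha : DifferentiableAt ℝ a p) (hb : DifferentiableAt ℝ b p) :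
    HasFDerivAt (fun q : ℝ × ℝ => -q.2 * a q + q.1 * b q)
      (((-p.2) • fderiv ℝ a p + a p • -(ContinuousLinearMap.snd ℝ ℝ ℝ))
        + (p.1 • fderiv ℝ b p + b p • ContinuousLinearMap.fst ℝ ℝ ℝ)) p :=
  ((hasFDerivAt_snd.neg.mul ha.hasFDerivAt).add (hasFDerivAt_fst.mul hb.hasFDerivAt))

theorem pdx_shape (ha : DifferentiableAt ℝ a p) (hb : DifferentiableAt ℝ b p) :
    pdx (fun q : ℝ × ℝ => -q.2 * a q + q.1 * b q) p
      = -p.2 * pdx a p + b p + p.1 * pdx b p := by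
  have := (shape_hasFDerivAt ha hb).fderiv
  unfold pdx; rw [this]
  simp [pdx]; ring

theorem pdy_shape (ha : DifferentiableAt ℝ a p) (hb : DifferentiableAt ℝ b p) :
    pdy (fun q : ℝ × ℝ => -q.2 * a q + q.1 * b q) p
      = -a p + (-p.2 * pdy a p + p.1 * pdy b p) := by
  have := (shape_hasFDerivAt ha hb).fderiv
  unfold pdy; rw [this]
  simp [pdy]; ring

theorem shape_diffAt (ha : DifferentiableAt ℝ a p) (hb : DifferentiableAt ℝ b p) :
    DifferentiableAt ℝ (fun q : ℝ × ℝ => -q.2 * a q + q.1 * b q) p :=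
  (shape_hasFDerivAt ha hb).differentiableAt

theorem pdx_add' (ha : DifferentiableAt ℝ a p) (hb : DifferentiableAt ℝ b p) :
    pdx (fun q => a q + b q) p = pdx a p + pdx b p := by
  unfold pdx; rw [fderiv_fun_add ha hb]; simp
theorem pdy_add' (ha : DifferentiableAt ℝ a p) (hb : DifferentiableAt ℝ b p) :
    pdy (fun q => a q + b q) p = pdy a p + pdy b p := by
  unfold pdy; rw [fderiv_fun_add ha hb]; simp
theorem pdx_neg' : pdx (fun q => -a q) p = -pdx a p := by
  unfold pdx; rw [fderiv_fun_neg]; simp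
theorem pdy_neg' : pdy (fun q => -a q) p = -pdy a p := by
  unfold pdy; rw [fderiv_fun_neg]; simp

/-- chain rule along a curve -/
theorem chain_rule {γ : ℝ → ℝ × ℝ} {s : ℝ} {d : ℝ × ℝ} (hγd : HasDerivAt γ d s)
    {f : ℝ × ℝ → ℝ} (hf : DifferentiableAt ℝ f (γ s)) :
    HasDerivAt (fun t => f (γ t)) (d.1 * pdx f (γ s) + d.2 * pdy f (γ s)) s := by
  have H := hf.hasFDerivAt.comp_hasDerivAt s hγd
  rwa [fderiv_apply_eq] at H

/-- extension of an identity from `Om` to its closure -/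
theorem ext_closure {g : ℝ × ℝ → ℝ} {Om : Set (ℝ × ℝ)}
    (hU : IsOpen U) (hsub : closure Om ⊆ U) (hg : ContinuousOn g U)
    (h0 : ∀ p ∈ Om, g p = 0) (hp : p ∈ closure Om) : g p = 0 := by
  have hne : (nhdsWithin p Om).NeBot := mem_closure_iff_nhdsWithin_neBot.mp hp
  have hc : ContinuousAt g p := hg.continuousAt (hU.mem_nhds (hsub hp))
  have t1 : Filter.Tendsto g (nhdsWithin p Om) (nhds (g p)) :=
    hc.continuousWithinAt.tendsto
  have t2 : Filter.Tendsto g (nhdsWithin p Om) (nhds 0) :=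
    Filter.Tendsto.congr'
      (by filter_upwards [self_mem_nhdsWithin] with q hq using (h0 q hq).symm)
      tendsto_const_nhds
  exact tendsto_nhds_unique t1 t2

theorem Rop_eq : Rop u = fun q : ℝ × ℝ => -q.2 * pdx u q + q.1 * pdy u q := rfl

theorem Rop_smooth (hU : IsOpen U) (h : ContDiffOn ℝ (⊤ : ℕ∞) u U) :
    ContDiffOn ℝ (⊤ : ℕ∞) (Rop u) U := by
  rw [Rop_eq]
  exact ((contDiff_snd.neg.contDiffOn).mul (pdx_smooth hU h)).add
    ((contDiff_fst.contDiffOn).mul (pdy_smooth hU h))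

theorem pdxC_gradC (hU : IsOpen U) (h : ContDiffOn ℝ (⊤ : ℕ∞) v U) (hp : p ∈ U) :
    pdxC (gradC v) p = (pdx (pdx v) p : ℂ) + Complex.I * (pdx (pdy v) p : ℂ) := by
  have h1 := (diffAt hU (pdx_smooth hU h) hp).hasFDerivAt
  have h2 := (diffAt hU (pdy_smooth hU h) hp).hasFDerivAt
  have hA : HasFDerivAt (fun q => ((pdx v q : ℝ) : ℂ))
      (Complex.ofRealCLM.comp (fderiv ℝ (pdx v) p)) p :=
    Complex.ofRealCLM.hasFDerivAt.comp p h1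
  have hB : HasFDerivAt (fun q => ((pdy v q : ℝ) : ℂ))
      (Complex.ofRealCLM.comp (fderiv ℝ (pdy v) p)) p :=
    Complex.ofRealCLM.hasFDerivAt.comp p h2
  have H : HasFDerivAt (gradC v)
      (Complex.ofRealCLM.comp (fderiv ℝ (pdx v) p)
        + Complex.I • Complex.ofRealCLM.comp (fderiv ℝ (pdy v) p)) p :=
    hA.add (hB.const_smul Complex.I)
  have := H.fderiv
  unfold pdxC; rw [this]
  simp [pdx, smul_eq_mul]

theorem pdyC_gradC (hU : IsOpen U) (h : ContDiffOn ℝ (⊤ : ℕ∞) v U) (hp : p ∈ U) :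
    pdyC (gradC v) p = (pdy (pdx v) p : ℂ) + Complex.I * (pdy (pdy v) p : ℂ) := by
  have h1 := (diffAt hU (pdx_smooth hU h) hp).hasFDerivAt
  have h2 := (diffAt hU (pdy_smooth hU h) hp).hasFDerivAt
  have hA : HasFDerivAt (fun q => ((pdx v q : ℝ) : ℂ))
      (Complex.ofRealCLM.comp (fderiv ℝ (pdx v) p)) p :=
    Complex.ofRealCLM.hasFDerivAt.comp p h1
  have hB : HasFDerivAt (fun q => ((pdy v q : ℝ) : ℂ))
      (Complex.ofRealCLM.comp (fderiv ℝ (pdy v) p)) p :=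
    Complex.ofRealCLM.hasFDerivAt.comp p h2
  have H : HasFDerivAt (gradC v)
      (Complex.ofRealCLM.comp (fderiv ℝ (pdx v) p)
        + Complex.I • Complex.ofRealCLM.comp (fderiv ℝ (pdy v) p)) p :=
    hA.add (hB.const_smul Complex.I)
  have := H.fderiv
  unfold pdyC; rw [this]
  simp [pdy, smul_eq_mul]

section lapcomm
variable (hU : IsOpen U) (h : ContDiffOn ℝ (⊤ : ℕ∞) u U)
include hU h

theorem lap_Rop (hp : p ∈ U) :
    lap (Rop u) p = -p.2 * lap (pdx u) p + p.1 * lap (pdy u) p := by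
  have hw1 := pdx_smooth hU h
  have hw2 := pdy_smooth hU h
  have h11 := pdx_smooth hU hw1; have h12 := pdy_smooth hU hw1
  have h21 := pdx_smooth hU hw2; have h22 := pdy_smooth hU hw2
  have hUmem := hU.mem_nhds hp
  have ex : pdx (Rop u) =ᶠ[nhds p]
      fun q => (-q.2 * pdx (pdx u) q + q.1 * pdx (pdy u) q) + pdy u q := by
    filter_upwards [hUmem] with q hq
    rw [Rop_eq, pdx_shape (diffAt hU hw1 hq) (diffAt hU hw2 hq)]; ring
  have ey : pdy (Rop u) =ᶠ[nhds p]
      fun q => (-q.2 * pdy (pdx u) q + q.1 * pdy (pdy u) q) + (-(pdx u q)) := by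
    filter_upwards [hUmem] with q hq
    rw [Rop_eq, pdy_shape (diffAt hU hw1 hq) (diffAt hU hw2 hq)]; ring
  have Hxx : pdx (pdx (Rop u)) p
      = (-p.2 * pdx (pdx (pdx u)) p + pdx (pdy u) p + p.1 * pdx (pdx (pdy u)) p)
        + pdx (pdy u) p := by
    rw [pdx_congr ex,
      pdx_add' (shape_diffAt (diffAt hU h11 hp) (diffAt hU h21 hp)) (diffAt hU hw2 hp),
      pdx_shape (diffAt hU h11 hp) (diffAt hU h21 hp)]
  have Hyy : pdy (pdy (Rop u)) p
      = (-(pdy (pdx u) p) + (-p.2 * pdy (pdy (pdx u)) p + p.1 * pdy (pdy (pdy u)) p))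
        + (-(pdy (pdx u) p)) := by
    rw [pdy_congr ey,
      pdy_add' (b := fun q => -pdx u q) (shape_diffAt (diffAt hU h12 hp) (diffAt hU h22 hp)) (diffAt hU hw1 hp).neg,
      pdy_shape (diffAt hU h12 hp) (diffAt hU h22 hp), pdy_neg']
  have hsym2 := symm_second hU h hp
  unfold lap
  rw [Hxx, Hyy, hsym2]; ring

theorem lap_pdx_comm (hp : p ∈ U) : lap (pdx u) p = pdx (lap u) p := by
  have hw1 := pdx_smooth hU h
  have hw2 := pdy_smooth hU h
  have h11 := pdx_smooth hU hw1
  have h22 := pdy_smooth hU hw2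
  have ef : pdx (pdy u) =ᶠ[nhds p] pdy (pdx u) := by
    filter_upwards [hU.mem_nhds hp] with q hq using symm_second hU h hq
  have e1 : pdx (lap u) p = pdx (pdx (pdx u)) p + pdx (pdy (pdy u)) p := by
    rw [show lap u = fun q => pdx (pdx u) q + pdy (pdy u) q from rfl,
      pdx_add' (diffAt hU h11 hp) (diffAt hU h22 hp)]
  have e2 : pdx (pdy (pdy u)) p = pdy (pdy (pdx u)) p := by
    rw [symm_second hU hw2 hp, pdy_congr ef]
  rw [e1, e2]; rfl

theorem lap_pdy_comm (hp : p ∈ U) : lap (pdy u) p = pdy (lap u) p := by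
  have hw1 := pdx_smooth hU h
  have hw2 := pdy_smooth hU h
  have h11 := pdx_smooth hU hw1
  have h22 := pdy_smooth hU hw2
  have ef : pdx (pdy u) =ᶠ[nhds p] pdy (pdx u) := by
    filter_upwards [hU.mem_nhds hp] with q hq using symm_second hU h hq
  have e1 : pdy (lap u) p = pdy (pdx (pdx u)) p + pdy (pdy (pdy u)) p := by
    rw [show lap u = fun q => pdx (pdx u) q + pdy (pdy u) q from rfl,
      pdy_add' (diffAt hU h11 hp) (diffAt hU h22 hp)]
  have e2 : pdx (pdx (pdy u)) p = pdy (pdx (pdx u)) p := by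
    rw [pdx_congr ef, symm_second hU hw1 hp]
  rw [e1, ← e2]; rfl

omit hU h in
theorem lap_smooth (hU : IsOpen U) (h : ContDiffOn ℝ (⊤ : ℕ∞) u U) :
    ContDiffOn ℝ (⊤ : ℕ∞) (lap u) U :=
  (pdx_smooth hU (pdx_smooth hU h)).add (pdy_smooth hU (pdy_smooth hU h))

end lapcomm


/-- Boundary trace of `∇Rω`:
`∇Rω = (-i)·e^{iθ}·(½ (r²)')` and
`∂(∇Rω)/∂n = (-i)·e^{iθ}·(κ·½ (r²)' + i·½ (r²)'')`. -/
theorem boundary_trace_grad_rotation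
    (Om : Set (ℝ × ℝ)) (hopen : IsOpen Om) (hconn : IsConnected Om)
    (hbdd : Bornology.IsBounded Om)
    (L : ℝ) (hL : 0 < L)
    (γ : ℝ → ℝ × ℝ) (θ : ℝ → ℝ)
    (hγsmooth : ContDiff ℝ (⊤ : ℕ∞) γ) (hθsmooth : ContDiff ℝ (⊤ : ℕ∞) θ)
    (hγper : ∀ s, γ (s + L) = γ s)
    (hθper : ∀ s, θ (s + L) = θ s + 2 * π)
    (hrange : Set.range γ = frontier Om)
    (hinj : Set.InjOn γ (Set.Ico 0 L))
    (hγderiv : ∀ s, deriv γ s = (Real.cos (θ s), Real.sin (θ s)))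
    (ω : ℝ × ℝ → ℝ)
    (hωsmooth : SmoothNearClosure Om ω)
    (hωpde : ∀ p ∈ Om, - lap ω p = ω p)
    (hωNeumann : ∀ s, nderiv (θ s) ω (γ s) = 0)
    (hωbdry : ∀ p ∈ frontier Om, ω p = 1)
    (s : ℝ) :
    gradC (Rop ω) (γ s)
      = -Complex.I * Complex.exp (Complex.I * (θ s : ℂ)) *
        (((1 / 2) * deriv (fun t => (γ t).1 ^ 2 + (γ t).2 ^ 2) s : ℝ) : ℂ)
    ∧ nderivC (θ s) (gradC (Rop ω)) (γ s)
      = -Complex.I * Complex.exp (Complex.I * (θ s : ℂ)) *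
        ((((-deriv θ s) * ((1 / 2) * deriv (fun t => (γ t).1 ^ 2 + (γ t).2 ^ 2) s) : ℝ) : ℂ)
          + Complex.I *
            (((1 / 2) * deriv (deriv (fun t => (γ t).1 ^ 2 + (γ t).2 ^ 2)) s : ℝ) : ℂ)) := by
  obtain ⟨U, hU, hsubU, hωC⟩ := hωsmooth
  have hfr : ∀ t, γ t ∈ frontier Om := fun t => hrange ▸ Set.mem_range_self t
  have hcl : ∀ t, γ t ∈ closure Om := fun t => frontier_subset_closure (hfr t)
  have hmem : ∀ t, γ t ∈ U := fun t => hsubU (hcl t)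
  -- curve derivatives
  have hγd : ∀ t, HasDerivAt γ (Real.cos (θ t), Real.sin (θ t)) t := by
    intro t
    have h := (hγsmooth.differentiable (by simp) t).hasDerivAt
    rwa [hγderiv t] at h
  have hθd : ∀ t, HasDerivAt θ (deriv θ t) t :=
    fun t => (hθsmooth.differentiable (by simp) t).hasDerivAt
  have hXd : ∀ t, HasDerivAt (fun t => (γ t).1) (Real.cos (θ t)) t :=
    fun t => (ContinuousLinearMap.fst ℝ ℝ ℝ).hasFDerivAt.comp_hasDerivAt t (hγd t)
  have hYd : ∀ t, HasDerivAt (fun t => (γ t).2) (Real.sin (θ t)) t :=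
    fun t => (ContinuousLinearMap.snd ℝ ℝ ℝ).hasFDerivAt.comp_hasDerivAt t (hγd t)
  set qf : ℝ → ℝ := fun t => (γ t).1 * Real.cos (θ t) + (γ t).2 * Real.sin (θ t) with hqf
  set r2 : ℝ → ℝ := fun t => (γ t).1 ^ 2 + (γ t).2 ^ 2 with hr2
  have hr2d : ∀ t, HasDerivAt r2 (2 * qf t) t := by
    intro t
    have h := ((hXd t).pow 2).add ((hYd t).pow 2)
    refine h.congr_deriv ?_
    simp [hqf]; ring
  have hq_eq : ∀ t, (1/2 : ℝ) * deriv r2 t = qf t := by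
    intro t; rw [(hr2d t).deriv]; ring
  have hderiv_r2 : deriv r2 = fun t => 2 * qf t := funext fun t => (hr2d t).deriv
  have hqfd : ∀ t, DifferentiableAt ℝ qf t := fun t =>
    (((hXd t).mul ((hθd t).cos)).add ((hYd t).mul ((hθd t).sin))).differentiableAt
  have hq'_eq : (1/2 : ℝ) * deriv (deriv r2) s = deriv qf s := by
    rw [hderiv_r2, deriv_const_mul 2 (hqfd s)]; ring
  -- first derivatives of ω vanish on the boundary
  have hωγ : (fun t => ω (γ t)) = fun _ => (1:ℝ) := funext fun t => hωbdry _ (hfr t)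
  have hT : ∀ t, Real.cos (θ t) * pdx ω (γ t) + Real.sin (θ t) * pdy ω (γ t) = 0 := by
    intro t
    have h1 := (chain_rule (hγd t) (diffAt hU hωC (hmem t))).deriv
    rw [hωγ] at h1
    simpa using h1.symm
  have hN : ∀ t, Real.sin (θ t) * pdx ω (γ t) - Real.cos (θ t) * pdy ω (γ t) = 0 :=
    fun t => hωNeumann t
  have hpy : ∀ t : ℝ, Real.sin (θ t)^2 + Real.cos (θ t)^2 = 1 :=
    fun t => Real.sin_sq_add_cos_sq (θ t)
  have hx0 : ∀ t, pdx ω (γ t) = 0 := by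
    intro t
    linear_combination Real.cos (θ t) * hT t + Real.sin (θ t) * hN t
      - pdx ω (γ t) * hpy t
  have hy0 : ∀ t, pdy ω (γ t) = 0 := by
    intro t
    linear_combination Real.sin (θ t) * hT t - Real.cos (θ t) * hN t
      - pdy ω (γ t) * hpy t
  -- Laplacian on the boundary
  have hlapb : ∀ t, lap ω (γ t) + ω (γ t) = 0 := by
    intro t
    exact ext_closure (g := fun p => lap ω p + ω p) hU hsubU
      (((lap_smooth hU hωC).add hωC).continuousOn)
      (fun p hp => by have := hωpde p hp; show lap ω p + ω p = 0; linarith) (hcl t)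
  have htr : ∀ t, pdx (pdx ω) (γ t) + pdy (pdy ω) (γ t) = -1 := by
    intro t
    have h := hlapb t
    rw [hωbdry _ (hfr t)] at h
    have : lap ω (γ t) = pdx (pdx ω) (γ t) + pdy (pdy ω) (γ t) := rfl
    linarith [this ▸ h]
  -- second derivative relations along the boundary
  have hxline : (fun t => pdx ω (γ t)) = fun _ => (0:ℝ) := funext hx0
  have hyline : (fun t => pdy ω (γ t)) = fun _ => (0:ℝ) := funext hy0
  have hE1ω : ∀ t, Real.cos (θ t) * pdx (pdx ω) (γ t)
      + Real.sin (θ t) * pdy (pdx ω) (γ t) = 0 := by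
    intro t
    have h1 := (chain_rule (hγd t) (diffAt hU (pdx_smooth hU hωC) (hmem t))).deriv
    rw [hxline] at h1
    simpa using h1.symm
  have hE2ω : ∀ t, Real.cos (θ t) * pdx (pdy ω) (γ t)
      + Real.sin (θ t) * pdy (pdy ω) (γ t) = 0 := by
    intro t
    have h1 := (chain_rule (hγd t) (diffAt hU (pdy_smooth hU hωC) (hmem t))).deriv
    rw [hyline] at h1
    simpa using h1.symm
  have hsymω : ∀ t, pdx (pdy ω) (γ t) = pdy (pdx ω) (γ t) :=
    fun t => symm_second hU hωC (hmem t)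
  have hA : ∀ t, pdx (pdx ω) (γ t) = -Real.sin (θ t)^2 := by
    intro t
    linear_combination Real.cos (θ t) * hE1ω t - Real.sin (θ t) * hE2ω t
      + Real.cos (θ t) * Real.sin (θ t) * hsymω t + Real.sin (θ t)^2 * htr t
      - pdx (pdx ω) (γ t) * hpy t
  have hB : ∀ t, pdx (pdy ω) (γ t) = Real.cos (θ t) * Real.sin (θ t) := by
    intro t
    linear_combination Real.sin (θ t) * hE1ω t + Real.cos (θ t) * hE2ω t
      + Real.sin (θ t)^2 * hsymω t - Real.cos (θ t) * Real.sin (θ t) * htr t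
      - pdx (pdy ω) (γ t) * hpy t
  have hC : ∀ t, pdy (pdy ω) (γ t) = -Real.cos (θ t)^2 := by
    intro t
    linear_combination htr t - hA t + hpy t
  -- first derivatives of v = Rop ω on the boundary
  set v := Rop ω with hv
  have hvsm : ContDiffOn ℝ (⊤ : ℕ∞) v U := Rop_smooth hU hωC
  have hvx : ∀ t, pdx v (γ t) = Real.sin (θ t) * qf t := by
    intro t
    rw [hv, Rop_eq,
      pdx_shape (diffAt hU (pdx_smooth hU hωC) (hmem t)) (diffAt hU (pdy_smooth hU hωC) (hmem t)),
      hA t, hB t, hy0 t]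
    simp [hqf]; ring
  have hvy : ∀ t, pdy v (γ t) = -(Real.cos (θ t) * qf t) := by
    intro t
    rw [hv, Rop_eq,
      pdy_shape (diffAt hU (pdx_smooth hU hωC) (hmem t)) (diffAt hU (pdy_smooth hU hωC) (hmem t)),
      hx0 t, ← hsymω t, hB t, hC t]
    simp [hqf]; ring
  have hv0 : ∀ t, v (γ t) = 0 := by
    intro t
    show -(γ t).2 * pdx ω (γ t) + (γ t).1 * pdy ω (γ t) = 0
    rw [hx0 t, hy0 t]; ring
  -- Δv = -v extended to the boundary
  have hlv : ∀ t, pdx (pdx v) (γ t) + pdy (pdy v) (γ t) = 0 := by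
    intro t
    have hext : (fun p => lap v p + v p) (γ t) = 0 := by
      refine ext_closure hU hsubU (((lap_smooth hU hvsm).add hvsm).continuousOn) ?_ (hcl t)
      intro p hp
      have hpU : p ∈ U := hsubU (subset_closure hp)
      have h1 := lap_Rop hU hωC hpU
      have h2 := lap_pdx_comm hU hωC hpU
      have h3 := lap_pdy_comm hU hωC hpU
      have ePDE : lap ω =ᶠ[nhds p] (fun q => -(ω q)) := by
        filter_upwards [hopen.mem_nhds hp] with q hq
        have := hωpde q hq; linarith
      have h4 : pdx (lap ω) p = -pdx ω p := by rw [pdx_congr ePDE, pdx_neg']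
      have h5 : pdy (lap ω) p = -pdy ω p := by rw [pdy_congr ePDE, pdy_neg']
      have hvp : v p = -p.2 * pdx ω p + p.1 * pdy ω p := rfl
      have : lap v p = -p.2 * (-pdx ω p) + p.1 * (-pdy ω p) := by
        rw [hv, h1, h2, h3, h4, h5]
      rw [this, hvp]; ring
    have h0 := hv0 t
    have hlapval : lap v (γ t) + v (γ t) = 0 := hext
    have : lap v (γ t) = pdx (pdx v) (γ t) + pdy (pdy v) (γ t) := rfl
    linarith [this ▸ hlapval]
  -- second derivative relations for v along the boundary, at s
  have hqd : HasDerivAt qf (deriv qf s) s := (hqfd s).hasDerivAt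
  have hvxline : (fun t => pdx v (γ t)) = fun t => Real.sin (θ t) * qf t := funext hvx
  have hvyline : (fun t => pdy v (γ t)) = fun t => -(Real.cos (θ t) * qf t) := funext hvy
  have hRHS1 : HasDerivAt (fun t => Real.sin (θ t) * qf t)
      (Real.cos (θ s) * deriv θ s * qf s + Real.sin (θ s) * deriv qf s) s :=
    ((hθd s).sin.mul hqd)
  have hRHS2 : HasDerivAt (fun t => -(Real.cos (θ t) * qf t))
      (-((-Real.sin (θ s) * deriv θ s) * qf s + Real.cos (θ s) * deriv qf s)) s :=
    ((hθd s).cos.mul hqd).neg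
  have hE1v : Real.cos (θ s) * pdx (pdx v) (γ s) + Real.sin (θ s) * pdy (pdx v) (γ s)
      = Real.cos (θ s) * deriv θ s * qf s + Real.sin (θ s) * deriv qf s := by
    have h1 := (chain_rule (hγd s) (diffAt hU (pdx_smooth hU hvsm) (hmem s))).deriv
    rw [hvxline] at h1
    exact h1.symm.trans hRHS1.deriv
  have hE2v : Real.cos (θ s) * pdx (pdy v) (γ s) + Real.sin (θ s) * pdy (pdy v) (γ s)
      = -((-Real.sin (θ s) * deriv θ s) * qf s + Real.cos (θ s) * deriv qf s) := by
    have h1 := (chain_rule (hγd s) (diffAt hU (pdy_smooth hU hvsm) (hmem s))).deriv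
    rw [hvyline] at h1
    exact h1.symm.trans hRHS2.deriv
  have hsymv : pdx (pdy v) (γ s) = pdy (pdx v) (γ s) := symm_second hU hvsm (hmem s)
  constructor
  · -- part 1
    show (pdx v (γ s) : ℂ) + Complex.I * (pdy v (γ s) : ℂ) = _
    rw [hvx s, hvy s, hq_eq s, mul_comm Complex.I ((θ s : ℝ) : ℂ), Complex.exp_mul_I,
      ← Complex.ofReal_cos, ← Complex.ofReal_sin]
    rw [Complex.ext_iff]
    constructor
    · simp only [Complex.add_re, Complex.add_im, Complex.sub_re, Complex.sub_im, Complex.mul_re, Complex.mul_im, Complex.neg_re, Complex.neg_im, Complex.I_re, Complex.I_im, Complex.ofReal_re, Complex.ofReal_im, Complex.sin_ofReal_re, Complex.sin_ofReal_im, Complex.cos_ofReal_re, Complex.cos_ofReal_im, mul_zero, zero_mul, mul_one, one_mul, sub_zero, zero_sub, add_zero, zero_add, neg_neg, neg_zero]; ring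
    · simp only [Complex.add_re, Complex.add_im, Complex.sub_re, Complex.sub_im, Complex.mul_re, Complex.mul_im, Complex.neg_re, Complex.neg_im, Complex.I_re, Complex.I_im, Complex.ofReal_re, Complex.ofReal_im, Complex.sin_ofReal_re, Complex.sin_ofReal_im, Complex.cos_ofReal_re, Complex.cos_ofReal_im, mul_zero, zero_mul, mul_one, one_mul, sub_zero, zero_sub, add_zero, zero_add, neg_neg, neg_zero]; ring
  · -- part 2
    have hgx := pdxC_gradC hU hvsm (hmem s)
    have hgy := pdyC_gradC hU hvsm (hmem s)
    show (Real.sin (θ s) : ℂ) * pdxC (gradC v) (γ s)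
        - (Real.cos (θ s) : ℂ) * pdyC (gradC v) (γ s) = _
    rw [hgx, hgy, hq_eq s, hq'_eq, mul_comm Complex.I ((θ s : ℝ) : ℂ), Complex.exp_mul_I,
      ← Complex.ofReal_cos, ← Complex.ofReal_sin]
    rw [Complex.ext_iff]
    constructor
    · simp only [Complex.add_re, Complex.add_im, Complex.sub_re, Complex.sub_im, Complex.mul_re, Complex.mul_im, Complex.neg_re, Complex.neg_im, Complex.I_re, Complex.I_im, Complex.ofReal_re, Complex.ofReal_im, Complex.sin_ofReal_re, Complex.sin_ofReal_im, Complex.cos_ofReal_re, Complex.cos_ofReal_im, mul_zero, zero_mul, mul_one, one_mul, sub_zero, zero_sub, add_zero, zero_add, neg_neg, neg_zero]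
      linear_combination (-1 : ℝ) * hE2v + Real.sin (θ s) * hlv s + Real.cos (θ s) * hsymv
    · simp only [Complex.add_re, Complex.add_im, Complex.sub_re, Complex.sub_im, Complex.mul_re, Complex.mul_im, Complex.neg_re, Complex.neg_im, Complex.I_re, Complex.I_im, Complex.ofReal_re, Complex.ofReal_im, Complex.sin_ofReal_re, Complex.sin_ofReal_im, Complex.cos_ofReal_re, Complex.cos_ofReal_im, mul_zero, zero_mul, mul_one, one_mul, sub_zero, zero_sub, add_zero, zero_add, neg_neg, neg_zero]
      linear_combination hE1v + Real.sin (θ s) * hsymv - Real.cos (θ s) * hlv s
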